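/- Let Δ : A → A be a weak-2-local derivation on a C*-algebra A, let p be a projection in A, and let b ∈ A satisfy pb = bp = 0. Then pΔ(a + b)p = pΔ(a)p for every a ∈ A. In particular, pΔ(a)p = pΔ(a - (1-p)a(1-p))p for every a ∈ A. -/

import Mathlib

/-!
For every derivation `D` and every `b` with `pb = bp = 0`, the Leibniz rule applied to `p * b = 0`
gives `p D(b) p = 0`. To test `pΔ(a + b)p - pΔ(a)p` against a functional `φ`, take the derivation
`D` that agrees with `Δ` at `a + b` and `a` for the functional `x ↦ φ (p x p)`: by linearity of `D`
the test value becomes `φ (p D(b) p) = 0`, and the dual separates points. The second claim is the first one with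
`b = (1 - p) a (1 - p)`.
-/

variable {A : Type*} [NonUnitalNormedRing A] [StarRing A] [CStarRing A] [NormedSpace ℂ A]
  [IsScalarTower ℂ A A] [SMulCommClass ℂ A A] [StarModule ℂ A] [CompleteSpace A]

/-- A (bounded linear) derivation on `A`. -/
def IsDerivationCLM (D : A →L[ℂ] A) : Prop := ∀ x y, D (x * y) = D x * y + x * D y

/-- A (non-necessarily linear) weak-2-local derivation on the C*-algebra `A`. -/
def IsWeak2LocalDerivation (Δ : A → A) : Prop :=
  ∀ a b : A, ∀ φ : A →L[ℂ] ℂ, ∃ D : A →L[ℂ] A,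
    IsDerivationCLM D ∧ φ (Δ a) = φ (D a) ∧ φ (Δ b) = φ (D b)

theorem mul_apply_mul_eq_zero_of_leibniz {R : Type*} [NonUnitalRing R] {D : R → R}
    (hD : ∀ x y, D (x * y) = D x * y + x * D y) {p b : R} (hpb : p * b = 0) (hbp : b * p = 0) :
    p * D b * p = 0 := by
  have hD0 : D 0 = 0 := by simpa using hD 0 0
  have hpDb : p * D b = -(D p * b) := by
    rw [eq_neg_iff_add_eq_zero, add_comm, ← hD, hpb, hD0]
  rw [hpDb, neg_mul, mul_assoc, hbp, mul_zero, neg_zero]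

theorem IsWeak2LocalDerivation.apply_add_eq_of_forall_derivation {B : Type*}
    [NonUnitalNormedRing B] [NormedSpace ℂ B] {Δ : B → B}
    (hΔ : IsWeak2LocalDerivation Δ) (T : B →L[ℂ] B) {a b : B}
    (hT : ∀ D, IsDerivationCLM D → T (D b) = 0) : T (Δ (a + b)) = T (Δ a) := by
  refine (SeparatingDual.eq_iff_forall_dual_eq (R := ℂ)).2 fun φ => ?_
  obtain ⟨D, hD, hab, ha⟩ := hΔ (a + b) a (φ.comp T)
  simp only [ContinuousLinearMap.comp_apply] at hab ha
  rw [hab, ha, map_add, map_add, hT D hD, add_zero]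

section Corner

variable {R : Type*} [NonUnitalRing R] {p : R}

-- `a - p * a - a * p + p * a * p` is `(1 - p) a (1 - p)` written without a unit.
theorem IsIdempotentElem.mul_compl_corner_eq_zero (hp : IsIdempotentElem p) (a : R) :
    p * (a - p * a - a * p + p * a * p) = 0 := by
  simp only [mul_add, mul_sub, ← mul_assoc, hp.eq]
  abel

theorem IsIdempotentElem.compl_corner_mul_eq_zero (hp : IsIdempotentElem p) (a : R) :
    (a - p * a - a * p + p * a * p) * p = 0 := by
  simp only [add_mul, sub_mul, mul_assoc, hp.eq]
  abel

end Corner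

theorem proj_weak2local_proj_general (Δ : A → A) (hΔ : IsWeak2LocalDerivation Δ)
    (p : A) (hp : IsIdempotentElem p) :
    (∀ a b : A, p * b = 0 → b * p = 0 → p * Δ (a + b) * p = p * Δ a * p) ∧
    (∀ a : A, p * Δ a * p = p * Δ (a - (a - p * a - a * p + p * a * p)) * p) := by
  have hcorner : ∀ a b : A, p * b = 0 → b * p = 0 → p * Δ (a + b) * p = p * Δ a * p :=
    fun a b hpb hbp =>
      hΔ.apply_add_eq_of_forall_derivation (ContinuousLinearMap.mulLeftRight ℂ A p p) fun _ hD =>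
        mul_apply_mul_eq_zero_of_leibniz hD hpb hbp
  refine ⟨hcorner, fun a => ?_⟩
  have h := hcorner (a - (a - p * a - a * p + p * a * p)) _ (hp.mul_compl_corner_eq_zero a)
    (hp.compl_corner_mul_eq_zero a)
  rwa [sub_add_cancel] at h

/-- For a weak-2-local derivation `Δ` on a C*-algebra `A`, a projection `p` and `b ∈ A` with
`pb = bp = 0`, one has `p Δ(a+b) p = p Δ(a) p` for all `a`; in particular
`p Δ(a) p = p Δ(a - (1-p)a(1-p)) p`, the latter expressed without a unit as
`p Δ(a) p = p Δ(a - (a - pa - ap + pap)) p`. -/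
theorem proj_weak2local_proj (Δ : A → A) (hΔ : IsWeak2LocalDerivation Δ)
    (p : A) (hp : IsIdempotentElem p) (hps : star p = p) :
    (∀ a b : A, p * b = 0 → b * p = 0 → p * Δ (a + b) * p = p * Δ a * p) ∧
    (∀ a : A, p * Δ a * p = p * Δ (a - (a - p * a - a * p + p * a * p)) * p) :=
  proj_weak2local_proj_general Δ hΔ p hp
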